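/- For smooth functions h₁, h₂ : ℝ → ℝ and a₁ ≠ 0, the vector fields Z(h) = h(t)∂_y - (y/(2a₁))(h'(t)(v∂_u - u∂_v) + h''(t)∂_w) satisfy [Z(h₁), Z(h₂)] = W((1/(2a₁))(h₁'h₂ - h₁h₂')). -/

import Mathlib

/-- Coordinates on ℝ⁷: indices 0..6 ↦ (t,x,y,z,u,v,w). -/
abbrev R7 := Fin 7 → ℝ

/-- Lie bracket of vector fields on ℝ⁷ (in coefficient form). -/
noncomputable def lieBracket (V W : R7 → R7) : R7 → R7 :=
  fun p => fderiv ℝ W p (V p) - fderiv ℝ V p (W p)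

/-- Z(h) = h(t)∂_y - (y/(2a₁))[h'(t)(v∂_u - u∂_v) + h''(t)∂_w]. -/
noncomputable def Zfield (a₁ : ℝ) (h : ℝ → ℝ) : R7 → R7 :=
  fun p => ![0, 0, h (p 0), 0,
    -(p 2 / (2 * a₁)) * deriv h (p 0) * p 5,
    (p 2 / (2 * a₁)) * deriv h (p 0) * p 4,
    -(p 2 / (2 * a₁)) * deriv (deriv h) (p 0)]

/-- W(m) = m(t)(v∂_u - u∂_v) + m'(t)∂_w. -/
noncomputable def Wfield (m : ℝ → ℝ) : R7 → R7 :=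
  fun p => ![0, 0, 0, 0, m (p 0) * p 5, -(m (p 0)) * p 4, deriv m (p 0)]

lemma cons_val_five' {α : Type*} (a b c d e f g : α) :
    (![a,b,c,d,e,f,g] : Fin 7 → α) 5 = f := rfl

lemma cons_val_six' {α : Type*} (a b c d e f g : α) :
    (![a,b,c,d,e,f,g] : Fin 7 → α) 6 = g := rfl

lemma Z_fderiv_apply (a : ℝ) (h : ℝ → ℝ) (hh : ContDiff ℝ (⊤ : ℕ∞) h) (p v : R7) :
    fderiv ℝ (Zfield a h) p v = ![0, 0, deriv h (p 0) * v 0, 0,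
      -(v 2 / (2*a)) * deriv h (p 0) * p 5
        - p 2 / (2*a) * deriv (deriv h) (p 0) * v 0 * p 5
        - p 2 / (2*a) * deriv h (p 0) * v 5,
      v 2 / (2*a) * deriv h (p 0) * p 4
        + p 2 / (2*a) * deriv (deriv h) (p 0) * v 0 * p 4
        + p 2 / (2*a) * deriv h (p 0) * v 4,
      -(v 2 / (2*a)) * deriv (deriv h) (p 0)
        - p 2 / (2*a) * deriv (deriv (deriv h)) (p 0) * v 0] := by
  have hhi : ContDiff ℝ (⊤ : ℕ∞) h := hh.of_le (by simp)
  have Dh : Differentiable ℝ h := hhi.differentiable (by norm_num)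
  have hh' : ContDiff ℝ (⊤ : ℕ∞) (deriv h) := (contDiff_infty_iff_deriv (𝕜 := ℝ).mp hhi).2
  have Dh' : Differentiable ℝ (deriv h) := hh'.differentiable (by norm_num)
  have hh'' : ContDiff ℝ (⊤ : ℕ∞) (deriv (deriv h)) := (contDiff_infty_iff_deriv (𝕜 := ℝ).mp hh').2
  have Dh'' : Differentiable ℝ (deriv (deriv h)) := hh''.differentiable (by norm_num)
  have hproj : ∀ i : Fin 7, HasFDerivAt (fun q : R7 => q i)
      ((ContinuousLinearMap.proj i : R7 →L[ℝ] ℝ)) p := fun i => by exact hasFDerivAt_apply i p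
  have Hg : ∀ g : ℝ → ℝ, Differentiable ℝ g → HasFDerivAt (fun q : R7 => g (q 0))
      (deriv g (p 0) • (ContinuousLinearMap.proj 0 : R7 →L[ℝ] ℝ)) p :=
    fun g hg => HasDerivAt.comp_hasFDerivAt p (hg (p 0)).hasDerivAt (hproj 0)
  have hA : HasFDerivAt (fun q : R7 => -(q 2 / (2*a)))
      (-(((2*a)⁻¹ : ℝ) • (ContinuousLinearMap.proj 2 : R7 →L[ℝ] ℝ))) p := by
    simp only [div_eq_mul_inv]; exact ((hproj 2).mul_const ((2*a)⁻¹)).neg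
  have hB : HasFDerivAt (fun q : R7 => q 2 / (2*a))
      ((((2*a)⁻¹ : ℝ) • (ContinuousLinearMap.proj 2 : R7 →L[ℝ] ℝ))) p := by
    simpa [div_eq_mul_inv] using (hproj 2).mul_const ((2*a)⁻¹)
  have h4 := (hA.mul (Hg (deriv h) Dh')).mul (hproj 5)
  have h5 := (hB.mul (Hg (deriv h) Dh')).mul (hproj 4)
  have h6 := hA.mul (Hg (deriv (deriv h)) Dh'')
  have h2 := Hg h Dh
  have hfd : fderiv ℝ (Zfield a h) p =
      ContinuousLinearMap.pi (fun i => fderiv ℝ (fun q => Zfield a h q i) p) := by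
    refine fderiv_pi (𝕜 := ℝ) (φ := fun i q => Zfield a h q i) ?_
    intro i
    fin_cases i <;> simp only [Zfield, Fin.reduceFinMk, Matrix.cons_val_zero, Matrix.cons_val_one,
      Matrix.head_cons, Matrix.cons_val_two, Matrix.tail_cons, Matrix.cons_val_three,
      Matrix.cons_val_four, cons_val_five', cons_val_six']
    · exact differentiableAt_const _
    · exact differentiableAt_const _
    · exact h2.differentiableAt
    · exact differentiableAt_const _
    · exact h4.differentiableAt
    · exact h5.differentiableAt
    · exact h6.differentiableAt
  rw [hfd]
  funext i
  rw [ContinuousLinearMap.pi_apply]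
  fin_cases i <;>
    simp only [Zfield, Fin.reduceFinMk, Matrix.cons_val_zero, Matrix.cons_val_one, Matrix.head_cons,
      Matrix.cons_val_two, Matrix.tail_cons, Matrix.cons_val_three, Matrix.cons_val_four,
      cons_val_five', cons_val_six']
  · simp
  · simp
  · rw [h2.fderiv]; simp
  · simp
  · rw [HasFDerivAt.fderiv (f := fun q : R7 => -(q 2 / (2 * a)) * deriv h (q 0) * q 5) h4]
    simp only [Pi.mul_apply, ContinuousLinearMap.add_apply, ContinuousLinearMap.smul_apply,
      ContinuousLinearMap.neg_apply, ContinuousLinearMap.proj_apply, smul_eq_mul]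
    ring
  · rw [HasFDerivAt.fderiv (f := fun q : R7 => q 2 / (2 * a) * deriv h (q 0) * q 4) h5]
    simp only [Pi.mul_apply, ContinuousLinearMap.add_apply, ContinuousLinearMap.smul_apply,
      ContinuousLinearMap.neg_apply, ContinuousLinearMap.proj_apply, smul_eq_mul]
    ring
  · rw [HasFDerivAt.fderiv (f := fun q : R7 => -(q 2 / (2 * a)) * deriv (deriv h) (q 0)) h6]
    simp only [Pi.mul_apply, ContinuousLinearMap.add_apply, ContinuousLinearMap.smul_apply,
      ContinuousLinearMap.neg_apply, ContinuousLinearMap.proj_apply, smul_eq_mul]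
    ring

/-- [Z(h₁), Z(h₂)] = W((1/(2a₁))(h₁'h₂ - h₁h₂')). -/
theorem stmt_4 (a₁ : ℝ) (ha₁ : a₁ ≠ 0) (h₁ h₂ : ℝ → ℝ)
    (hh₁ : ContDiff ℝ (⊤ : ℕ∞) h₁) (hh₂ : ContDiff ℝ (⊤ : ℕ∞) h₂) :
    lieBracket (Zfield a₁ h₁) (Zfield a₁ h₂) =
      Wfield (fun t => (1 / (2 * a₁)) * (deriv h₁ t * h₂ t - h₁ t * deriv h₂ t)) := by
  have hi₁ : ContDiff ℝ (⊤ : ℕ∞) h₁ := hh₁.of_le (by simp)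
  have hi₂ : ContDiff ℝ (⊤ : ℕ∞) h₂ := hh₂.of_le (by simp)
  have D1 : Differentiable ℝ h₁ := hi₁.differentiable (by norm_num)
  have D2 : Differentiable ℝ h₂ := hi₂.differentiable (by norm_num)
  have hd1 : ContDiff ℝ (⊤ : ℕ∞) (deriv h₁) := (contDiff_infty_iff_deriv (𝕜 := ℝ).mp hi₁).2
  have hd2 : ContDiff ℝ (⊤ : ℕ∞) (deriv h₂) := (contDiff_infty_iff_deriv (𝕜 := ℝ).mp hi₂).2
  have D1' : Differentiable ℝ (deriv h₁) := hd1.differentiable (by norm_num)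
  have D2' : Differentiable ℝ (deriv h₂) := hd2.differentiable (by norm_num)
  funext p
  have hm : deriv (fun t => (1 / (2 * a₁)) * (deriv h₁ t * h₂ t - h₁ t * deriv h₂ t)) (p 0)
      = (1 / (2 * a₁)) * ((deriv (deriv h₁) (p 0) * h₂ (p 0) + deriv h₁ (p 0) * deriv h₂ (p 0))
        - (deriv h₁ (p 0) * deriv h₂ (p 0) + h₁ (p 0) * deriv (deriv h₂) (p 0))) := by
    rw [deriv_const_mul (d := fun t => deriv h₁ t * h₂ t - h₁ t * deriv h₂ t) _ (((D1'.differentiableAt).mul (D2.differentiableAt)).sub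
        ((D1.differentiableAt).mul (D2'.differentiableAt))),
      deriv_fun_sub (f := fun t => deriv h₁ t * h₂ t) (g := fun t => h₁ t * deriv h₂ t) ((D1'.differentiableAt).mul (D2.differentiableAt))
        ((D1.differentiableAt).mul (D2'.differentiableAt)),
      deriv_fun_mul D1'.differentiableAt D2.differentiableAt,
      deriv_fun_mul D1.differentiableAt D2'.differentiableAt]
  show fderiv ℝ (Zfield a₁ h₂) p (Zfield a₁ h₁ p)
      - fderiv ℝ (Zfield a₁ h₁) p (Zfield a₁ h₂ p) = _
  rw [Z_fderiv_apply a₁ h₂ hh₂ p _, Z_fderiv_apply a₁ h₁ hh₁ p _]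
  funext i
  simp only [Pi.sub_apply]
  fin_cases i <;>
    simp only [Zfield, Wfield, hm, Fin.reduceFinMk, Matrix.cons_val_zero, Matrix.cons_val_one, Matrix.head_cons,
      Matrix.cons_val_two, Matrix.tail_cons, Matrix.cons_val_three, Matrix.cons_val_four,
      cons_val_five', cons_val_six'] <;>
    ring
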